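/- There is no continuous local section of the map π: ∏_{n=1}^∞ 𝕋 → ∏_{n=1}^∞ 𝕋 defined by (z_n)_n ↦ (z_n²)_n on any nonempty open subset of the codomain. -/
import Mathlib

open Real

/-- There is no continuous square root on the whole circle. -/
lemma no_cont_sqrt (Q : Circle → Circle) (hQ : Continuous Q)
    (hsq : ∀ t, Q t ^ 2 = t) : False := by
  -- g x = Q (exp x) * (exp (x/2))⁻¹ squares to 1
  set g : ℝ → Circle := fun x => Q (Circle.exp x) * (Circle.exp (x / 2))⁻¹ with hg
  have hg2 : ∀ x, g x ^ 2 = 1 := by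
    intro x
    have : (Circle.exp (x / 2)) ^ 2 = Circle.exp x := by
      rw [sq, ← Circle.exp_add]; ring_nf
    simp [hg, mul_pow, inv_pow, this, hsq]
  set r : ℝ → ℝ := fun x => ((g x : ℂ)).re with hr
  have hrc : Continuous r := by
    apply Complex.continuous_re.comp
    exact continuous_subtype_val.comp
      ((hQ.comp Circle.exp.continuous).mul
        ((Circle.exp.continuous.comp (continuous_id.div_const 2)).inv))
  have hval : ∀ x, r x = 1 ∨ r x = -1 := by
    intro x
    have h2 : (g x : ℂ) * (g x : ℂ) = 1 := by
      rw [← Circle.coe_mul, ← sq, hg2 x, Circle.coe_one]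
    have hfac : ((g x : ℂ) - 1) * ((g x : ℂ) + 1) = 0 := by linear_combination h2
    rcases mul_eq_zero.1 hfac with h | h
    · left; have hx1 : (g x : ℂ) = 1 := by linear_combination h
      rw [hr]; simp [hx1]
    · right; have hx1 : (g x : ℂ) = -1 := by linear_combination h
      rw [hr]; simp [hx1]
  have heq : (Circle.exp π : ℂ) = -1 := by
    rw [Circle.coe_exp]; exact Complex.exp_pi_mul_I
  have h0 : g 0 = Q 1 := by simp [hg]
  have h2pi : (g (2 * π) : ℂ) = -(Q 1 : ℂ) := by
    have hh : (2 : ℝ) * π / 2 = π := by ring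
    rw [hg]
    simp only [hh, Circle.exp_two_pi, Circle.coe_mul, Circle.coe_inv, heq]
    ring
  have hr0 : r 0 = ((Q 1 : ℂ)).re := by rw [hr]; simp [h0]
  have hr2 : r (2 * π) = -((Q 1 : ℂ)).re := by
    rw [hr]; simp only [h2pi, Complex.neg_re]
  have hmem : (0 : ℝ) ∈ Set.uIcc (r 0) (r (2 * π)) := by
    rcases hval 0 with h | h
    · have h2 : r (2 * π) = -1 := by rw [hr2]; rw [h] at hr0; linarith
      rw [h, h2, Set.mem_uIcc]; norm_num
    · have h2 : r (2 * π) = 1 := by rw [hr2]; rw [h] at hr0; linarith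
      rw [h, h2, Set.mem_uIcc]; norm_num
  obtain ⟨x, _, hx⟩ :=
    intermediate_value_uIcc (a := (0:ℝ)) (b := 2 * π) hrc.continuousOn hmem
  rcases hval x with h | h <;> rw [hx] at h <;> norm_num at h

/-- There is no continuous local section of the squaring map
`π : ∏_{n=1}^∞ 𝕋 → ∏_{n=1}^∞ 𝕋`, `(z_n)_n ↦ (z_n²)_n`, on any nonempty open
subset of the codomain. -/
theorem stmt7 (U : Set (ℕ → Circle)) (hU : IsOpen U) (hne : U.Nonempty) :
    ¬ ∃ P : (ℕ → Circle) → (ℕ → Circle),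
        ContinuousOn P U ∧ ∀ z ∈ U, (fun n => (P z n) ^ 2) = z := by
  rintro ⟨P, hPc, hPs⟩
  obtain ⟨f, hf⟩ := hne
  obtain ⟨I, u, hIu, hsub⟩ := isOpen_pi_iff.1 hU f hf
  set N := (I.sup id) + 1 with hN
  have hNI : N ∉ I := by
    intro h
    have := Finset.le_sup (f := id) h
    simp only [id] at this
    omega
  have hupd : ∀ t : Circle, Function.update f N t ∈ U := by
    intro t
    apply hsub
    intro i hi
    rw [Function.update_apply, if_neg (by rintro rfl; exact hNI hi)]
    exact (hIu i hi).2
  have hcu : Continuous fun t : Circle => Function.update f N t := by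
    apply continuous_pi
    intro n
    simp only [Function.update_apply]
    by_cases h : n = N
    · simp only [h, if_pos rfl]; exact continuous_id
    · simp only [h, if_false]; exact continuous_const
  set Q : Circle → Circle := fun t => P (Function.update f N t) N with hQdef
  have hQc : Continuous Q := by
    apply (continuous_apply N).comp
    exact hPc.comp_continuous hcu hupd
  have hQsq : ∀ t, Q t ^ 2 = t := by
    intro t
    have := congrFun (hPs _ (hupd t)) N
    simpa [hQdef] using this
  exact no_cont_sqrt Q hQc hQsq
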